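/- Let k_1, k_2 ≥ 4 be even integers. Define V_{k_1,k_2}^ℤ[I_H] = {P ∈ V_{k_1,k_2}^ℤ : P|_{(1+S,1)} = 0, P|_{(1+U+U²,1)} = 0, P|_{(1,1−T)} = 0} and V_{k_1,k_2}^ℤ[I_V] = {P ∈ V_{k_1,k_2}^ℤ : P|_{(1,1+S)} = 0, P|_{(1,1+U+U²)} = 0, P|_{(1−US,1)} = 0}. Then V_{k_1,k_2}^ℤ[I_H] = { p(X_1) : p ∈ W_{k_1}^ℤ } (polynomials in X_1 alone, lying in W_{k_1}^ℤ) and V_{k_1,k_2}^ℤ[I_V] = { X_1^{k_1−2} · q(X_2) : q ∈ W_{k_2}^ℤ }. -/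

import Mathlib

open MvPolynomial

noncomputable section

/-- `S = (0 −1; 1 0)`. -/
def Smat : Matrix (Fin 2) (Fin 2) ℤ := !![0, -1; 1, 0]

/-- `T = (1 1; 0 1)`. -/
def Tmat : Matrix (Fin 2) (Fin 2) ℤ := !![1, 1; 0, 1]

/-- `U = (0 1; −1 1)`. -/
def Umat : Matrix (Fin 2) (Fin 2) ℤ := !![0, 1; -1, 1]

variable {R : Type*} [CommRing R]

/-- The slash action of a pair `(A,B)` of integral `2×2` matrices on a polynomial in the
two variables `X 0, X 1`, with weight exponents `w₁` on `X 0` and `w₂` on `X 1`: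
monomials `X 0^{e₀} X 1^{e₁}` are sent to
`(a X₀+b)^{e₀}(c X₀+d)^{w₁−e₀} · (a' X₁+b')^{e₁}(c' X₁+d')^{w₂−e₁}`; for polynomials of
degree `≤ wⱼ` in `X j` this is `(cX₀+d)^{w₁}(c'X₁+d')^{w₂} P((aX₀+b)/(cX₀+d),(a'X₁+b')/(c'X₁+d'))`. -/
def slash2 (w₁ w₂ : ℕ) (A B : Matrix (Fin 2) (Fin 2) ℤ) (P : MvPolynomial (Fin 2) R) :
    MvPolynomial (Fin 2) R :=
  ∑ e ∈ P.support, MvPolynomial.C (MvPolynomial.coeff e P) *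
    ((C ((A 0 0 : ℤ) : R) * X 0 + C ((A 0 1 : ℤ) : R)) ^ (e 0) *
      (C ((A 1 0 : ℤ) : R) * X 0 + C ((A 1 1 : ℤ) : R)) ^ (w₁ - e 0)) *
    ((C ((B 0 0 : ℤ) : R) * X 1 + C ((B 0 1 : ℤ) : R)) ^ (e 1) *
      (C ((B 1 0 : ℤ) : R) * X 1 + C ((B 1 1 : ℤ) : R)) ^ (w₂ - e 1))

/-- The slash action of a single matrix `A` on the variable `X j` (with weight exponent `w`),
leaving the other variable untouched. -/
def slashVar (j : Fin 2) (w : ℕ) (A : Matrix (Fin 2) (Fin 2) ℤ)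
    (P : MvPolynomial (Fin 2) R) : MvPolynomial (Fin 2) R :=
  if j = 0 then slash2 w 0 A 1 P else slash2 0 w 1 A P

/-- `P ∈ V_{k₁,k₂}`: degrees at most `k₁−2` in `X 0` and `k₂−2` in `X 1`. -/
def memV2 (k₁ k₂ : ℕ) (P : MvPolynomial (Fin 2) R) : Prop :=
  MvPolynomial.degreeOf 0 P ≤ k₁ - 2 ∧ MvPolynomial.degreeOf 1 P ≤ k₂ - 2

/-- `P` involves only the variable `X j`. -/
def onlyVar (j : Fin 2) (P : MvPolynomial (Fin 2) R) : Prop :=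
  ∀ i : Fin 2, i ≠ j → MvPolynomial.degreeOf i P = 0

/-- `P` is an element of `W_k` in the single variable `X j`: a polynomial of degree `≤ k−2`
in `X j` alone with `P|_{1+S} = 0` and `P|_{1+U+U²} = 0`. -/
def memW1 (j : Fin 2) (k : ℕ) (P : MvPolynomial (Fin 2) R) : Prop :=
  onlyVar j P ∧ MvPolynomial.degreeOf j P ≤ k - 2 ∧
    P + slashVar j (k - 2) Smat P = 0 ∧
    P + slashVar j (k - 2) Umat P + slashVar j (k - 2) (Umat * Umat) P = 0

/-- `P ∈ V_{k₁,k₂}[I_D]`: `P|_{(1,1)+(S,S)} = 0` and `P|_{(1,1)+(U,U)+(U²,U²)} = 0`. -/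
def memVID (k₁ k₂ : ℕ) (P : MvPolynomial (Fin 2) R) : Prop :=
  memV2 k₁ k₂ P ∧
    P + slash2 (k₁ - 2) (k₂ - 2) Smat Smat P = 0 ∧
    P + slash2 (k₁ - 2) (k₂ - 2) Umat Umat P +
      slash2 (k₁ - 2) (k₂ - 2) (Umat * Umat) (Umat * Umat) P = 0

/-- `P ∈ W_{k₁,k₂}`: the five defining relations. -/
def memW2 (k₁ k₂ : ℕ) (P : MvPolynomial (Fin 2) R) : Prop :=
  memV2 k₁ k₂ P ∧
    (P + slash2 (k₁-2) (k₂-2) Smat 1 P + slash2 (k₁-2) (k₂-2) 1 Smat P +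
      slash2 (k₁-2) (k₂-2) Smat Smat P = 0) ∧
    (P + slash2 (k₁-2) (k₂-2) Umat 1 P + slash2 (k₁-2) (k₂-2) (Umat*Umat) 1 P +
      slash2 (k₁-2) (k₂-2) Smat Smat P + slash2 (k₁-2) (k₂-2) (Smat*Umat) Smat P +
      slash2 (k₁-2) (k₂-2) (Smat*(Umat*Umat)) Smat P = 0) ∧
    (P + slash2 (k₁-2) (k₂-2) 1 Umat P + slash2 (k₁-2) (k₂-2) 1 (Umat*Umat) P +
      slash2 (k₁-2) (k₂-2) Smat Smat P + slash2 (k₁-2) (k₂-2) Smat (Smat*Umat) P +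
      slash2 (k₁-2) (k₂-2) Smat (Smat*(Umat*Umat)) P = 0) ∧
    (P + slash2 (k₁-2) (k₂-2) 1 Umat P + slash2 (k₁-2) (k₂-2) 1 (Umat*Umat) P +
      slash2 (k₁-2) (k₂-2) Umat 1 P + slash2 (k₁-2) (k₂-2) Umat Umat P +
      slash2 (k₁-2) (k₂-2) Umat (Umat*Umat) P + slash2 (k₁-2) (k₂-2) (Umat*Umat) 1 P +
      slash2 (k₁-2) (k₂-2) (Umat*Umat) Umat P +
      slash2 (k₁-2) (k₂-2) (Umat*Umat) (Umat*Umat) P = 0) ∧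
    (slash2 (k₁-2) (k₂-2) Smat Smat P + slash2 (k₁-2) (k₂-2) Smat (Smat*(Umat*Umat)) P +
      slash2 (k₁-2) (k₂-2) (Smat*(Umat*Umat)) (Smat*(Umat*Umat)) P +
      slash2 (k₁-2) (k₂-2) 1 (Umat*Umat) P - slash2 (k₁-2) (k₂-2) Umat Umat P = 0)

/-!
Write each polynomial as a polynomial in one of the variables over the other. The slash action
of `T` on `X₂` is the translation `f ↦ f(X+1)`, and a translation-invariant polynomial over a
characteristic-zero domain is constant, so `P|_{(1,1−T)} = 0` says exactly that `P` does not
involve `X₂`. The matrix `US = (1 0; 1 1)` acts on `X₁`-polynomials of degree `≤ w` by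
`f ↦ (X+1)^w f(X/(X+1))`, which the reversal `f ↦ X^w f(1/X)` conjugates into the same
translation; hence `P|_{(1−US,1)} = 0` says exactly that `P = X₁^w q(X₂)`. The remaining
relations only act on the other variable and pass to `P` resp. `q`.
-/

namespace Polynomial

variable {A : Type*} [CommRing A]

theorem eq_C_of_comp_X_add_one_eq [IsDomain A] [CharZero A] {p : A[X]}
    (h : p.comp (X + 1) = p) : p = C (p.eval 0) := by
  have periodic : ∀ n : ℕ, p.eval (n : A) = p.eval 0 := by
    intro n
    induction n with
    | zero => simp
    | succ n ih => simpa [ih] using congrArg (eval (n : A)) h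
  rw [← sub_eq_zero]
  refine eq_zero_of_infinite_isRoot _ ((Set.infinite_range_of_injective Nat.cast_injective).mono ?_)
  rintro _ ⟨n, rfl⟩
  simp [periodic n]

theorem reflect_X_add_one_pow (n : ℕ) : reflect n ((X + 1 : A[X]) ^ n) = (X + 1) ^ n := by
  ext k
  rw [coeff_reflect, coeff_X_add_one_pow, coeff_X_add_one_pow]
  rcases le_or_gt k n with hk | hk
  · rw [revAt_le hk, Nat.choose_symm hk]
  · rw [revAt_eq_self_of_lt hk]

theorem reflect_sum {ι : Type*} (N : ℕ) (s : Finset ι) (g : ι → A[X]) :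
    reflect N (∑ i ∈ s, g i) = ∑ i ∈ s, reflect N (g i) :=
  map_sum (AddMonoidHom.mk' (reflect N) (reflect_add · · N)) g s

/-- The slash action `f ↦ (cX+d)^w f((aX+b)/(cX+d))` of `M = (a b; c d)` on polynomials of
degree `≤ w`, extended linearly monomial by monomial to all of `A[X]`. -/
def slashPoly (w : ℕ) (M : Matrix (Fin 2) (Fin 2) ℤ) : A[X] →ₗ[A] A[X] :=
  lsum fun i => LinearMap.id.smulRight
    (((M 0 0 : A[X]) * X + (M 0 1 : A[X])) ^ i * ((M 1 0 : A[X]) * X + (M 1 1 : A[X])) ^ (w - i))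

variable {w : ℕ} {M : Matrix (Fin 2) (Fin 2) ℤ}

theorem slashPoly_monomial (n : ℕ) (a : A) :
    slashPoly w M (monomial n a) = C a * ((M 0 0 : A[X]) * X + (M 0 1 : A[X])) ^ n *
      ((M 1 0 : A[X]) * X + (M 1 1 : A[X])) ^ (w - n) := by
  rw [slashPoly, lsum_apply, sum_monomial_index _ _ (by simp)]
  simp [smul_eq_C_mul, mul_assoc]

theorem slashPoly_C_mul (a : A) (f : A[X]) : slashPoly w M (C a * f) = C a * slashPoly w M f := by
  rw [← smul_eq_C_mul, map_smul, smul_eq_C_mul]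

theorem slashPoly_X_pow (n : ℕ) :
    slashPoly w M (X ^ n : A[X]) = ((M 0 0 : A[X]) * X + (M 0 1 : A[X])) ^ n *
      ((M 1 0 : A[X]) * X + (M 1 1 : A[X])) ^ (w - n) := by
  rw [X_pow_eq_monomial, slashPoly_monomial, C_1, one_mul]

theorem slashPoly_Tmat (f : A[X]) : slashPoly w Tmat f = f.comp (X + 1) := by
  induction f using Polynomial.induction_on' with
  | add p q hp hq => rw [map_add, hp, hq, add_comp]
  | monomial n a => simp [slashPoly_monomial, Tmat]

theorem slashPoly_UmatSmat_monomial (n : ℕ) (a : A) :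
    slashPoly w (Umat * Smat) (monomial n a) = C a * X ^ n * (X + 1) ^ (w - n) := by
  simp [slashPoly_monomial, Umat, Smat, add_comm]

theorem reflect_slashPoly_UmatSmat {f : A[X]} (hf : f.natDegree ≤ w) :
    reflect w (slashPoly w (Umat * Smat) f) = (reflect w f).comp (X + 1) := by
  rw [as_sum_range' f (w + 1) (Nat.lt_succ_of_le hf), map_sum, reflect_sum, reflect_sum, sum_comp]
  refine Finset.sum_congr rfl fun i hi => ?_
  have hi : i ≤ w := Nat.lt_succ_iff.mp (Finset.mem_range.mp hi)
  have hX1 : (X + 1 : A[X]).natDegree ≤ 1 :=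
    (natDegree_add_le _ _).trans (by simp [natDegree_X_le])
  have hmul := reflect_mul (C (f.coeff i) * X ^ i) ((X + 1 : A[X]) ^ (w - i))
    (natDegree_C_mul_X_pow_le _ i) (natDegree_pow_le_of_le _ hX1)
  rw [mul_one, Nat.add_sub_cancel' hi] at hmul
  rw [slashPoly_UmatSmat_monomial, hmul, ← C_mul_X_pow_eq_monomial, reflect_C_mul_X_pow,
    reflect_C_mul_X_pow, revAt_le hi, reflect_X_add_one_pow]
  simp

theorem slashPoly_UmatSmat_C_mul_X_pow (c : A) :
    slashPoly w (Umat * Smat) (C c * X ^ w) = C c * X ^ w := by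
  rw [C_mul_X_pow_eq_monomial, slashPoly_UmatSmat_monomial, Nat.sub_self, pow_zero, mul_one,
    C_mul_X_pow_eq_monomial]

theorem slashPoly_UmatSmat_eq_self_iff [IsDomain A] [CharZero A] {f : A[X]}
    (hf : f.natDegree ≤ w) : slashPoly w (Umat * Smat) f = f ↔ ∃ c, f = C c * X ^ w := by
  constructor
  · intro h
    have hreflect := eq_C_of_comp_X_add_one_eq (by rw [← reflect_slashPoly_UmatSmat hf, h])
    exact ⟨_, by rw [← reflect_reflect (N := w) (p := f), hreflect, reflect_C]⟩
  · rintro ⟨c, rfl⟩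
    exact slashPoly_UmatSmat_C_mul_X_pow c

end Polynomial

/-- `MvPolynomial (Fin 2) R` as polynomials in `X j` over `MvPolynomial (Fin 1) R`, the other
variable becoming `X 0` of the coefficient ring. -/
def varEquiv (j : Fin 2) : MvPolynomial (Fin 2) R ≃ₐ[R] Polynomial (MvPolynomial (Fin 1) R) :=
  (renameEquiv R (Equiv.swap 0 j)).trans (finSuccEquiv R 1)

theorem varEquiv_C (j : Fin 2) (c : R) : varEquiv j (C c) = Polynomial.C (C c) :=
  (varEquiv j).commutes c

theorem varEquiv_X_self (j : Fin 2) : varEquiv j (X j : MvPolynomial (Fin 2) R) = Polynomial.X := by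
  simp [varEquiv, finSuccEquiv_X_zero]

theorem varEquiv_X_of_ne {i j : Fin 2} (h : i ≠ j) :
    varEquiv j (X i : MvPolynomial (Fin 2) R) = Polynomial.C (X 0) := by
  rw [varEquiv, AlgEquiv.trans_apply, renameEquiv_apply, rename_X,
    show Equiv.swap 0 j i = 1 by revert i j; decide]
  exact finSuccEquiv_X_succ (j := 0)

theorem natDegree_varEquiv (j : Fin 2) (P : MvPolynomial (Fin 2) R) :
    (varEquiv j P).natDegree = degreeOf j P := by
  simpa [varEquiv, natDegree_finSuccEquiv] using
    degreeOf_rename_of_injective (Equiv.injective (Equiv.swap (0 : Fin 2) j)) (p := P) j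

theorem varEquiv_monomial_zero (e : Fin 2 →₀ ℕ) (c : R) :
    varEquiv 0 (monomial e c) = Polynomial.C (C c * X 0 ^ e 1) * Polynomial.X ^ e 0 := by
  rw [monomial_eq, Finsupp.prod_fintype _ _ (fun _ => pow_zero _), Fin.prod_univ_two]
  simp only [map_mul, map_pow, varEquiv_C, varEquiv_X_self, varEquiv_X_of_ne one_ne_zero]
  ring

theorem varEquiv_monomial_one (e : Fin 2 →₀ ℕ) (c : R) :
    varEquiv 1 (monomial e c) = Polynomial.C (C c * X 0 ^ e 0) * Polynomial.X ^ e 1 := by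
  rw [monomial_eq, Finsupp.prod_fintype _ _ (fun _ => pow_zero _), Fin.prod_univ_two]
  simp only [map_mul, map_pow, varEquiv_C, varEquiv_X_self, varEquiv_X_of_ne zero_ne_one]
  ring

theorem varEquiv_slashVar (j : Fin 2) (w : ℕ) (M : Matrix (Fin 2) (Fin 2) ℤ)
    (P : MvPolynomial (Fin 2) R) :
    varEquiv j (slashVar j w M P) = Polynomial.slashPoly w M (varEquiv j P) := by
  conv_rhs => rw [as_sum P]
  rw [map_sum, map_sum]
  obtain rfl | rfl : j = 0 ∨ j = 1 := by omega
  · rw [slashVar, if_pos rfl, slash2, map_sum]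
    refine Finset.sum_congr rfl fun e _ => ?_
    rw [varEquiv_monomial_zero, Polynomial.slashPoly_C_mul, Polynomial.slashPoly_X_pow]
    simp [varEquiv_C, varEquiv_X_self, varEquiv_X_of_ne]
    ring
  · rw [slashVar, if_neg (by decide), slash2, map_sum]
    refine Finset.sum_congr rfl fun e _ => ?_
    rw [varEquiv_monomial_one, Polynomial.slashPoly_C_mul, Polynomial.slashPoly_X_pow]
    simp [varEquiv_C, varEquiv_X_self, varEquiv_X_of_ne]

theorem slashVar_one_X_zero_pow_mul (k w : ℕ) (M : Matrix (Fin 2) (Fin 2) ℤ)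
    (P : MvPolynomial (Fin 2) R) :
    slashVar 1 w M (X 0 ^ k * P) = X 0 ^ k * slashVar 1 w M P := by
  apply (varEquiv 1).injective
  rw [varEquiv_slashVar, map_mul (varEquiv 1), map_mul (varEquiv 1), varEquiv_slashVar, map_pow,
    varEquiv_X_of_ne (by decide), ← Polynomial.C_pow, Polynomial.slashPoly_C_mul]

theorem slashVar_UmatSmat_X_zero_pow_mul (w : ℕ) {q : MvPolynomial (Fin 2) R}
    (hq : degreeOf 0 q = 0) :
    slashVar 0 w (Umat * Smat) (X 0 ^ w * q) = X 0 ^ w * q := by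
  apply (varEquiv 0).injective
  rw [varEquiv_slashVar, map_mul, map_pow, varEquiv_X_self, mul_comm,
    Polynomial.eq_C_of_natDegree_eq_zero (p := varEquiv 0 q) (by rwa [natDegree_varEquiv]),
    Polynomial.slashPoly_UmatSmat_C_mul_X_pow]

theorem slashVar_Tmat_eq_self_iff [IsDomain R] [CharZero R] {w : ℕ}
    {P : MvPolynomial (Fin 2) R} : slashVar 1 w Tmat P = P ↔ degreeOf 1 P = 0 := by
  rw [← (varEquiv 1).injective.eq_iff, varEquiv_slashVar, Polynomial.slashPoly_Tmat,
    ← natDegree_varEquiv]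
  constructor
  · intro h
    rw [Polynomial.eq_C_of_comp_X_add_one_eq h, Polynomial.natDegree_C]
  · intro h
    rw [Polynomial.eq_C_of_natDegree_eq_zero h, Polynomial.C_comp]

theorem exists_eq_X_zero_pow_mul_of_slashVar_UmatSmat_eq [IsDomain R] [CharZero R] {w : ℕ}
    {P : MvPolynomial (Fin 2) R} (hP : degreeOf 0 P ≤ w)
    (h : slashVar 0 w (Umat * Smat) P = P) : ∃ q, degreeOf 0 q = 0 ∧ P = X 0 ^ w * q := by
  rw [← (varEquiv 0).injective.eq_iff, varEquiv_slashVar,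
    Polynomial.slashPoly_UmatSmat_eq_self_iff (by rwa [natDegree_varEquiv])] at h
  obtain ⟨c, hc⟩ := h
  refine ⟨(varEquiv 0).symm (Polynomial.C c), ?_, (varEquiv 0).injective ?_⟩
  · rw [← natDegree_varEquiv, AlgEquiv.apply_symm_apply, Polynomial.natDegree_C]
  · rw [map_mul, map_pow, varEquiv_X_self, AlgEquiv.apply_symm_apply, hc, mul_comm]

theorem onlyVar_zero_iff {P : MvPolynomial (Fin 2) R} : onlyVar 0 P ↔ degreeOf 1 P = 0 := by
  simp [onlyVar, Fin.forall_fin_two]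

theorem onlyVar_one_iff {P : MvPolynomial (Fin 2) R} : onlyVar 1 P ↔ degreeOf 0 P = 0 := by
  simp [onlyVar, Fin.forall_fin_two]

/-- `P ∈ V_{k₁,k₂}[I_H]`. -/
def memVIH (k₁ k₂ : ℕ) (P : MvPolynomial (Fin 2) R) : Prop :=
  memV2 k₁ k₂ P ∧
    P + slashVar 0 (k₁ - 2) Smat P = 0 ∧
    P + slashVar 0 (k₁ - 2) Umat P + slashVar 0 (k₁ - 2) (Umat * Umat) P = 0 ∧
    P - slashVar 1 (k₂ - 2) Tmat P = 0

/-- `P ∈ V_{k₁,k₂}[I_V]`. -/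
def memVIV (k₁ k₂ : ℕ) (P : MvPolynomial (Fin 2) R) : Prop :=
  memV2 k₁ k₂ P ∧
    P + slashVar 1 (k₂ - 2) Smat P = 0 ∧
    P + slashVar 1 (k₂ - 2) Umat P + slashVar 1 (k₂ - 2) (Umat * Umat) P = 0 ∧
    P - slashVar 0 (k₁ - 2) (Umat * Smat) P = 0

theorem memVIH_iff [IsDomain R] [CharZero R] (k₁ k₂ : ℕ) (P : MvPolynomial (Fin 2) R) :
    memVIH k₁ k₂ P ↔ memW1 0 k₁ P := by
  rw [memVIH, memW1, memV2, onlyVar_zero_iff, sub_eq_zero, eq_comm (a := P),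
    slashVar_Tmat_eq_self_iff]
  constructor
  · rintro ⟨⟨hdeg, -⟩, hS, hU, hT⟩
    exact ⟨hT, hdeg, hS, hU⟩
  · rintro ⟨hT, hdeg, hS, hU⟩
    exact ⟨⟨hdeg, hT ▸ Nat.zero_le _⟩, hS, hU, hT⟩

theorem memVIV_iff [IsDomain R] [CharZero R] (k₁ k₂ : ℕ) (P : MvPolynomial (Fin 2) R) :
    memVIV k₁ k₂ P ↔ ∃ q, memW1 1 k₂ q ∧ P = X 0 ^ (k₁ - 2) * q := by
  have hX : (X 0 ^ (k₁ - 2) : MvPolynomial (Fin 2) R) ≠ 0 := pow_ne_zero _ (X_ne_zero 0)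
  have degreeOf_one_eq (q : MvPolynomial (Fin 2) R) :
      degreeOf 1 (X 0 ^ (k₁ - 2) * q) = degreeOf 1 q := by
    rw [mul_comm, degreeOf_mul_X_pow_of_ne _ (by decide)]
  simp only [memVIV, memW1, memV2, onlyVar_one_iff, sub_eq_zero]
  constructor
  · rintro ⟨⟨hdeg₀, hdeg₁⟩, hS, hU, hUS⟩
    obtain ⟨q, hq, rfl⟩ := exists_eq_X_zero_pow_mul_of_slashVar_UmatSmat_eq hdeg₀ hUS.symm
    simp only [slashVar_one_X_zero_pow_mul, ← mul_add, mul_eq_zero_iff_left hX] at hS hU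
    exact ⟨q, ⟨hq, (degreeOf_one_eq q) ▸ hdeg₁, hS, hU⟩, rfl⟩
  · rintro ⟨q, ⟨hq, hdeg, hS, hU⟩, rfl⟩
    refine ⟨⟨?_, (degreeOf_one_eq q).symm ▸ hdeg⟩, ?_, ?_,
      (slashVar_UmatSmat_X_zero_pow_mul _ hq).symm⟩
    · calc degreeOf 0 (X 0 ^ (k₁ - 2) * q)
          ≤ degreeOf 0 (X 0 ^ (k₁ - 2) : MvPolynomial (Fin 2) R) + degreeOf 0 q :=
            degreeOf_mul_le ..
        _ ≤ (k₁ - 2) * degreeOf 0 (X 0 : MvPolynomial (Fin 2) R) + 0 :=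
          add_le_add (degreeOf_pow_le ..) hq.le
        _ = k₁ - 2 := by simp
    · simp only [slashVar_one_X_zero_pow_mul, ← mul_add, hS, mul_zero]
    · simp only [slashVar_one_X_zero_pow_mul, ← mul_add, hU, mul_zero]

theorem statement18_general (k₁ k₂ : ℕ) :
    (∀ P : MvPolynomial (Fin 2) ℤ,
      (memV2 k₁ k₂ P ∧
        P + slashVar 0 (k₁ - 2) Smat P = 0 ∧
        P + slashVar 0 (k₁ - 2) Umat P + slashVar 0 (k₁ - 2) (Umat * Umat) P = 0 ∧
        P - slashVar 1 (k₂ - 2) Tmat P = 0) ↔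
      memW1 0 k₁ P) ∧
    (∀ P : MvPolynomial (Fin 2) ℤ,
      (memV2 k₁ k₂ P ∧
        P + slashVar 1 (k₂ - 2) Smat P = 0 ∧
        P + slashVar 1 (k₂ - 2) Umat P + slashVar 1 (k₂ - 2) (Umat * Umat) P = 0 ∧
        P - slashVar 0 (k₁ - 2) (Umat * Smat) P = 0) ↔
      ∃ q : MvPolynomial (Fin 2) ℤ, memW1 1 k₂ q ∧ P = X 0 ^ (k₁ - 2) * q) :=
  ⟨memVIH_iff k₁ k₂, memVIV_iff k₁ k₂⟩

/-- computation of `V_{k₁,k₂}^ℤ[I_H]` and `V_{k₁,k₂}^ℤ[I_V]`. -/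
theorem statement18 (k₁ k₂ : ℕ) (hk₁ : 4 ≤ k₁) (he₁ : Even k₁) (hk₂ : 4 ≤ k₂) (he₂ : Even k₂) :
    (∀ P : MvPolynomial (Fin 2) ℤ,
      (memV2 k₁ k₂ P ∧
        P + slashVar 0 (k₁ - 2) Smat P = 0 ∧
        P + slashVar 0 (k₁ - 2) Umat P + slashVar 0 (k₁ - 2) (Umat * Umat) P = 0 ∧
        P - slashVar 1 (k₂ - 2) Tmat P = 0) ↔
      memW1 0 k₁ P) ∧
    (∀ P : MvPolynomial (Fin 2) ℤ,
      (memV2 k₁ k₂ P ∧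
        P + slashVar 1 (k₂ - 2) Smat P = 0 ∧
        P + slashVar 1 (k₂ - 2) Umat P + slashVar 1 (k₂ - 2) (Umat * Umat) P = 0 ∧
        P - slashVar 0 (k₁ - 2) (Umat * Smat) P = 0) ↔
      ∃ q : MvPolynomial (Fin 2) ℤ, memW1 1 k₂ q ∧ P = X 0 ^ (k₁ - 2) * q) :=
  statement18_general k₁ k₂
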